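/- arXiv:2605.13690 — 2 statements merged into one kernel-verified Lean document; each statement's English description precedes it below -/
import Mathlib

section
/- Let H₁ and H₂ be non-isomorphic k-uniform hypergraphs on the vertex set [n], with 0–1 adjacency tensors A₁, A₂ ∈ S^{k,n}. Then there exists a symmetric tensor P ∈ S^{k,n} such that Θ_P(A₁) ≠ Θ_P(A₂), where Θ_P(A) = max over permutations Π ∈ Sym(n) of ⟨P, Π·A⟩. -/
/-- A tensor is symmetric if it is invariant under all permutations of its `k` indices. -/
def IsSymmTensor {k n : ℕ} (A : (Fin k → Fin n) → ℝ) : Prop :=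
  ∀ (σ : Equiv.Perm (Fin k)) (i : Fin k → Fin n), A (i ∘ σ) = A i

/-- The relabeling action of `Sym(n)` on tensors: `(Π·A)_{i₁,…,i_k} = A_{Π⁻¹ i₁,…,Π⁻¹ i_k}`. -/
def permAct {k n : ℕ} (π : Equiv.Perm (Fin n)) (A : (Fin k → Fin n) → ℝ) :
    (Fin k → Fin n) → ℝ :=
  fun i => A fun l => π.symm (i l)

/-- A `k`-uniform hypergraph on vertex set `Fin n`. -/
structure KUniformHypergraph (k n : ℕ) where
  edges : Finset (Finset (Fin n))
  uniform : ∀ e ∈ edges, e.card = k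

open Classical in
/-- The 0–1 adjacency tensor of a hypergraph: entry 1 at `(i₁,…,i_k)` iff the indices
are distinct and `{i₁,…,i_k}` is a hyperedge. -/
noncomputable def adjTensor {k n : ℕ} (H : KUniformHypergraph k n) : (Fin k → Fin n) → ℝ :=
  fun i => if Function.Injective i ∧ Finset.image i Finset.univ ∈ H.edges then 1 else 0

/-- Pattern alignment score `Θ_P(A) = max_{Π ∈ Sym(n)} ⟨P, Π·A⟩`. -/
noncomputable def alignScore {k n : ℕ} (P A : (Fin k → Fin n) → ℝ) : ℝ :=
  Finset.univ.sup' ⟨1, Finset.mem_univ 1⟩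
    fun π : Equiv.Perm (Fin n) => ∑ i : Fin k → Fin n, P i * permAct π A i

/-!
The adjacency tensor of `H` is the indicator of the set `T(H)` of injective tuples enumerating
hyperedges, so `⟨A_H, Π·A_G⟩ = |T(H) ∩ T(ΠG)|`. Order the hypergraphs so that `|T(H₂)| ≤ |T(H₁)|`
and take `P = A₁`. Then `Θ_P(A₁) ≥ ⟨A₁, A₁⟩ = |T(H₁)|`, while `Θ_P(A₂) = |T(H₁) ∩ T(ΠH₂)|` for a
maximising `Π`; equality forces `T(H₁) = T(ΠH₂)`, and since `T(H)` determines the edges of `H`,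
`H₁ = ΠH₂`.
-/

open Finset

lemma Finset.eq_of_card_le_card_inter {α : Type*} [DecidableEq α] {s t : Finset α}
    (hts : #t ≤ #s) (hs : #s ≤ #(s ∩ t)) : s = t := by
  have hst : s ⊆ t := inter_eq_left.mp (eq_of_subset_of_card_le inter_subset_left hs)
  exact eq_of_subset_of_card_le hst hts

namespace KUniformHypergraph

variable {k n : ℕ}

def map (π : Equiv.Perm (Fin n)) (H : KUniformHypergraph k n) : KUniformHypergraph k n where
  edges := H.edges.image (fun e => e.image π)
  uniform := by
    simp only [mem_image, forall_exists_index, and_imp, forall_apply_eq_imp_iff₂]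
    exact fun e he => (card_image_of_injective e π.injective).trans (H.uniform e he)

lemma mem_map_edges {π : Equiv.Perm (Fin n)} {H : KUniformHypergraph k n} {s : Finset (Fin n)} :
    s ∈ (H.map π).edges ↔ s.image π.symm ∈ H.edges := by
  simp only [map, mem_image]
  constructor
  · rintro ⟨e, he, rfl⟩
    simpa [image_image] using he
  · exact fun h => ⟨_, h, by simp [image_image]⟩

lemma map_inv_edges_eq {H G : KUniformHypergraph k n} {π : Equiv.Perm (Fin n)}
    (h : (H.map π).edges = G.edges) : (G.map π⁻¹).edges = H.edges := by
  simp [← h, map, image_image, Function.comp_def]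

open Classical in
def tuples (H : KUniformHypergraph k n) : Finset (Fin k → Fin n) :=
  univ.filter fun i => Function.Injective i ∧ univ.image i ∈ H.edges

lemma adjTensor_apply (H : KUniformHypergraph k n) (i : Fin k → Fin n) :
    adjTensor H i = if i ∈ H.tuples then 1 else 0 := by
  simp [adjTensor, tuples]

lemma edges_eq_image_tuples (H : KUniformHypergraph k n) :
    H.edges = H.tuples.image fun i => univ.image i := by
  ext e
  simp only [tuples, mem_image, mem_filter, mem_univ, true_and]
  constructor
  · intro he
    exact ⟨e.orderEmbOfFin (H.uniform e he),
      ⟨(e.orderEmbOfFin _).injective, by rwa [image_orderEmbOfFin_univ]⟩,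
      image_orderEmbOfFin_univ e _⟩
  · rintro ⟨i, ⟨-, hi⟩, rfl⟩
    exact hi

lemma tuples_map (π : Equiv.Perm (Fin n)) (H : KUniformHypergraph k n) :
    (H.map π).tuples = H.tuples.map (Equiv.piCongrRight fun _ => π).toEmbedding := by
  ext i
  simp only [tuples, mem_map_equiv, mem_filter, mem_univ, true_and, mem_map_edges, image_image]
  exact and_congr (π.symm.comp_injective i).symm Iff.rfl

lemma card_tuples_map (π : Equiv.Perm (Fin n)) (H : KUniformHypergraph k n) :
    #(H.map π).tuples = #H.tuples := by
  rw [tuples_map, card_map]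

lemma permAct_adjTensor (π : Equiv.Perm (Fin n)) (H : KUniformHypergraph k n) :
    permAct π (adjTensor H) = adjTensor (H.map π) := by
  ext i
  simp only [permAct, adjTensor_apply, tuples_map, mem_map_equiv]
  rfl

lemma isSymmTensor_adjTensor (H : KUniformHypergraph k n) : IsSymmTensor (adjTensor H) := by
  intro σ i
  simp only [adjTensor, σ.injective_comp, ← image_image, image_univ_equiv]

lemma inner_adjTensor (H G : KUniformHypergraph k n) :
    ∑ i, adjTensor H i * adjTensor G i = #(H.tuples ∩ G.tuples) := by
  simp [adjTensor_apply, inter_comm]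

lemma inner_adjTensor_permAct (H G : KUniformHypergraph k n) (π : Equiv.Perm (Fin n)) :
    ∑ i, adjTensor H i * permAct π (adjTensor G) i = #(H.tuples ∩ (G.map π).tuples) := by
  rw [permAct_adjTensor, inner_adjTensor]

lemma exists_map_eq_of_alignScore_eq {H G : KUniformHypergraph k n}
    (hle : #G.tuples ≤ #H.tuples)
    (h : alignScore (adjTensor H) (adjTensor G) = alignScore (adjTensor H) (adjTensor H)) :
    ∃ π : Equiv.Perm (Fin n), (G.map π).edges = H.edges := by
  obtain ⟨π, -, hπ⟩ := exists_mem_eq_sup' univ_nonempty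
    fun π : Equiv.Perm (Fin n) => ∑ i, adjTensor H i * permAct π (adjTensor G) i
  have hself : (#H.tuples : ℝ) ≤ alignScore (adjTensor H) (adjTensor H) := by
    refine le_sup'_of_le _ (mem_univ 1) ?_
    rw [inner_adjTensor_permAct, inter_eq_left.mpr]
    simp [map]
  have hcard : #H.tuples ≤ #(H.tuples ∩ (G.map π).tuples) := by
    have := hself.trans_eq (h.symm.trans hπ)
    rwa [inner_adjTensor_permAct, Nat.cast_le] at this
  refine ⟨π, ?_⟩
  rw [edges_eq_image_tuples H, edges_eq_image_tuples (G.map π),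
    eq_of_card_le_card_inter ((card_tuples_map π G).trans_le hle) hcard]

end KUniformHypergraph

theorem pattern_alignment_completeness_general (k n : ℕ)
    (H₁ H₂ : KUniformHypergraph k n)
    (hniso : ¬ ∃ σ : Equiv.Perm (Fin n), H₁.edges.image (fun e => e.image σ) = H₂.edges) :
    ∃ P : (Fin k → Fin n) → ℝ, IsSymmTensor P ∧
      alignScore P (adjTensor H₁) ≠ alignScore P (adjTensor H₂) := by
  wlog hle : #H₂.tuples ≤ #H₁.tuples generalizing H₁ H₂
  · obtain ⟨P, hP, hne⟩ :=
      this H₂ H₁ (fun ⟨σ, hσ⟩ => hniso ⟨σ⁻¹, KUniformHypergraph.map_inv_edges_eq hσ⟩)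
        (le_of_not_ge hle)
    exact ⟨P, hP, hne.symm⟩
  refine ⟨adjTensor H₁, H₁.isSymmTensor_adjTensor, fun heq => hniso ?_⟩
  obtain ⟨π, hπ⟩ := KUniformHypergraph.exists_map_eq_of_alignScore_eq hle heq.symm
  exact ⟨π⁻¹, KUniformHypergraph.map_inv_edges_eq hπ⟩

/-- **Pattern alignment completeness**: non-isomorphic `k`-uniform hypergraphs on `[n]`
are separated by the pattern alignment score of some symmetric template tensor. -/
theorem pattern_alignment_completeness (k n : ℕ) (hk : 1 ≤ k) (hn : 1 ≤ n)
    (H₁ H₂ : KUniformHypergraph k n)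
    (hniso : ¬ ∃ σ : Equiv.Perm (Fin n), H₁.edges.image (fun e => e.image σ) = H₂.edges) :
    ∃ P : (Fin k → Fin n) → ℝ, IsSymmTensor P ∧
      alignScore P (adjTensor H₁) ≠ alignScore P (adjTensor H₂) :=
  pattern_alignment_completeness_general k n H₁ H₂ hniso
end

section
/- Let S₁ and S₂ be two non-isomorphic Steiner triple systems STS(v) on [v] (no bijection of [v] carries the triples of S₁ onto the triples of S₂), with adjacency tensors A₁, A₂ ∈ S^{3,v}. Then for every doubly stochastic v × v matrix D, ⟨A₁, D^{⊗3}·A₂⟩ < v(v−1); consequently the Sinkhorn relaxed alignment scores satisfy Θ̂^{SK}_{A₁}(A₂) = max over D ∈ B_v of ⟨A₁, D^{⊗3}·A₂⟩ < v(v−1) = Θ̂^{SK}_{A₁}(A₁). -/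
/-
Each entry of `D^{⊗3}·A₂` is an average of `0`–`1` values, so `⟨A₁, D^{⊗3}·A₂⟩ ≤ ∑ A₁ = v(v−1)`,
the number of ordered triples of `S₁`. In case of equality, whenever `{x, y, z}` is a triple of
`S₁` and `D` is positive at `(x, a)`, `(y, b)` and `(z, c)`, the set `{a, b, c}` is a triple of
`S₂`. Since two points of a triple determine the third, every row of `D` then has a single
positive entry, so `D` is supported on a permutation, and this permutation maps the triples of
`S₁` into, hence onto, those of `S₂`. The supremum over `B_v` is attained because `B_v` is
compact (Birkhoff), so it is strict as well; the identity attains `v(v−1)` for `A₁` itself.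
-/

/-- A doubly stochastic matrix: nonnegative entries, all row sums and column sums equal 1. -/
def IsDoublyStochastic {n : ℕ} (D : Fin n → Fin n → ℝ) : Prop :=
  (∀ i j, 0 ≤ D i j) ∧ (∀ i, ∑ j, D i j = 1) ∧ (∀ j, ∑ i, D i j = 1)

/-- `(D^{⊗k} · A)_{i₁,…,i_k} = ∑_{j₁,…,j_k} (∏_ℓ D_{i_ℓ j_ℓ}) · A_{j₁,…,j_k}`. -/
noncomputable def tensorApply {k n : ℕ} (D : Fin n → Fin n → ℝ)
    (A : (Fin k → Fin n) → ℝ) : (Fin k → Fin n) → ℝ :=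
  fun i => ∑ j : Fin k → Fin n, (∏ l, D (i l) (j l)) * A j

/-- Entrywise inner product of tensors: `⟨P, B⟩ = ∑_{i₁,…,i_k} P_i · B_i`. -/
noncomputable def tinner {k n : ℕ} (P B : (Fin k → Fin n) → ℝ) : ℝ :=
  ∑ i : Fin k → Fin n, P i * B i

/-- A Steiner triple system on `[v]`: a collection of 3-element subsets such that every
2-element subset is contained in exactly one triple. -/
def IsSTS (v : ℕ) (T : Finset (Finset (Fin v))) : Prop :=
  (∀ t ∈ T, t.card = 3) ∧
  ∀ x y : Fin v, x ≠ y → ∃! t : Finset (Fin v), t ∈ T ∧ x ∈ t ∧ y ∈ t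

open Classical in
/-- The 0–1 adjacency tensor of a triple system: `A_{ijk} = 1` iff `i,j,k` are distinct
and `{i,j,k}` is a triple. -/
noncomputable def stsAdj {v : ℕ} (T : Finset (Finset (Fin v))) : (Fin 3 → Fin v) → ℝ :=
  fun i => if Function.Injective i ∧ Finset.image i Finset.univ ∈ T then 1 else 0

open Finset

section TensorAction

variable {k n : ℕ} {D : Fin n → Fin n → ℝ}

lemma isDoublyStochastic_one : IsDoublyStochastic (1 : Matrix (Fin n) (Fin n) ℝ) :=
  mem_doublyStochastic_iff_sum.1 (one_mem _)

lemma isCompact_setOf_isDoublyStochastic :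
    IsCompact {D : Fin n → Fin n → ℝ | IsDoublyStochastic D} := by
  have h : IsCompact (doublyStochastic ℝ (Fin n) : Set (Matrix (Fin n) (Fin n) ℝ)) := by
    rw [doublyStochastic_eq_convexHull_permMatrix]
    exact (Set.finite_range _).isCompact_convexHull ℝ
  have e : (doublyStochastic ℝ (Fin n) : Set (Matrix (Fin n) (Fin n) ℝ)) =
      {D | IsDoublyStochastic D} :=
    Set.ext fun _ => mem_doublyStochastic_iff_sum
  rwa [e] at h

lemma IsDoublyStochastic.exists_pos (hD : IsDoublyStochastic D) (x : Fin n) : ∃ a, 0 < D x a := by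
  obtain ⟨a, -, ha⟩ := exists_lt_of_sum_lt (s := univ) (f := 0) (g := D x) (by simp [hD.2.1 x])
  exact ⟨a, ha⟩

lemma IsDoublyStochastic.exists_perm_of_support_subsingleton (hD : IsDoublyStochastic D)
    (h : ∀ x a b, 0 < D x a → 0 < D x b → a = b) :
    ∃ σ : Equiv.Perm (Fin n), ∀ x, 0 < D x (σ x) := by
  choose σ hσ using hD.exists_pos
  have hsurj : Function.Surjective σ := fun a => by
    obtain ⟨x, -, hx⟩ :=
      exists_lt_of_sum_lt (s := univ) (f := 0) (g := fun x => D x a) (by simp [hD.2.2 a])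
    exact ⟨x, h x _ _ (hσ x) hx⟩
  exact ⟨Equiv.ofBijective σ (Finite.surjective_iff_bijective.1 hsurj), hσ⟩

lemma IsDoublyStochastic.sum_prod_eq_one (hD : IsDoublyStochastic D) (i : Fin k → Fin n) :
    ∑ j : Fin k → Fin n, ∏ l, D (i l) (j l) = 1 := by
  rw [← Fintype.prod_sum fun l a => D (i l) a]
  simp [hD.2.1]

lemma IsDoublyStochastic.prod_nonneg (hD : IsDoublyStochastic D) (i j : Fin k → Fin n) :
    0 ≤ ∏ l, D (i l) (j l) :=
  Finset.prod_nonneg fun _ _ => hD.1 _ _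

lemma IsDoublyStochastic.tensorApply_le_one (hD : IsDoublyStochastic D)
    {A : (Fin k → Fin n) → ℝ} (hA : ∀ j, A j ≤ 1) (i : Fin k → Fin n) :
    tensorApply D A i ≤ 1 :=
  calc tensorApply D A i ≤ ∑ j : Fin k → Fin n, ∏ l, D (i l) (j l) :=
        sum_le_sum fun j _ => mul_le_of_le_one_right (hD.prod_nonneg i j) (hA j)
    _ = 1 := hD.sum_prod_eq_one i

lemma IsDoublyStochastic.eq_one_of_tensorApply_eq_one (hD : IsDoublyStochastic D)
    {A : (Fin k → Fin n) → ℝ} (hA : ∀ j, A j ≤ 1) {i j : Fin k → Fin n}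
    (hi : tensorApply D A i = 1) (hij : ∀ l, 0 < D (i l) (j l)) : A j = 1 := by
  have hle : ∀ j ∈ univ, (∏ l, D (i l) (j l)) * A j ≤ ∏ l, D (i l) (j l) :=
    fun j _ => mul_le_of_le_one_right (hD.prod_nonneg i j) (hA j)
  have hsum : ∑ j : Fin k → Fin n, (∏ l, D (i l) (j l)) * A j =
      ∑ j : Fin k → Fin n, ∏ l, D (i l) (j l) := by
    rw [hD.sum_prod_eq_one]; exact hi
  exact (mul_eq_left₀ (prod_pos fun l _ => hij l).ne').1
    ((sum_eq_sum_iff_of_le hle).1 hsum j (mem_univ j))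

lemma tensorApply_one (A : (Fin k → Fin n) → ℝ) :
    tensorApply (1 : Matrix (Fin n) (Fin n) ℝ) A = A := by
  ext i
  simp [tensorApply, Matrix.one_apply, prod_boole, ← funext_iff]

lemma continuous_tinner_tensorApply (P A : (Fin k → Fin n) → ℝ) :
    Continuous fun D : Fin n → Fin n → ℝ => tinner P (tensorApply D A) := by
  unfold tinner tensorApply
  fun_prop

lemma tinner_le_sum {P B : (Fin k → Fin n) → ℝ} (hP : ∀ i, 0 ≤ P i) (hB : ∀ i, B i ≤ 1) :
    tinner P B ≤ ∑ i, P i :=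
  sum_le_sum fun i _ => mul_le_of_le_one_right (hP i) (hB i)

lemma eq_one_of_tinner_eq_sum {P B : (Fin k → Fin n) → ℝ} (hP : ∀ i, 0 ≤ P i)
    (hB : ∀ i, B i ≤ 1) (h : tinner P B = ∑ i, P i) {i : Fin k → Fin n} (hi : P i = 1) :
    B i = 1 := by
  have := (sum_eq_sum_iff_of_le fun i _ => mul_le_of_le_one_right (hP i) (hB i)).1 h i
    (mem_univ i)
  rwa [hi, one_mul] at this

end TensorAction

section Triples

variable {α : Type*} [DecidableEq α]

lemma Finset.ne_of_card_triple_eq_three {a b c : α} (h : #({a, b, c} : Finset α) = 3) :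
    a ≠ b ∧ a ≠ c ∧ b ≠ c := by
  grind [card_insert_le, card_singleton, card_pair]

lemma Finset.exists_eq_triple_of_card_eq_three {t : Finset α} {x y : α} (ht : #t = 3)
    (hx : x ∈ t) (hy : y ∈ t) (hxy : x ≠ y) : ∃ z, t = {x, y, z} := by
  have hy' : y ∈ t.erase x := mem_erase.2 ⟨hxy.symm, hy⟩
  obtain ⟨z, hz⟩ := card_eq_one.1 (by
    rw [card_erase_of_mem hy', card_erase_of_mem hx, ht] : #((t.erase x).erase y) = 1)
  exact ⟨z, by rw [← hz, insert_erase hy', insert_erase hx]⟩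

lemma Fintype.sum_fin_three_pi {β M : Type*} [Fintype β] [AddCommMonoid M]
    (f : (Fin 3 → β) → M) : ∑ i, f i = ∑ x, ∑ y, ∑ z, f ![x, y, z] := by
  simp only [← (Fin.consEquiv fun _ => β).sum_comp, Fintype.sum_prod_type, Fintype.sum_unique]
  rfl

end Triples

section SteinerTripleSystems

variable {v : ℕ} {T T₁ T₂ : Finset (Finset (Fin v))} {D : Fin v → Fin v → ℝ}

lemma stsAdj_nonneg (T : Finset (Finset (Fin v))) (i : Fin 3 → Fin v) : 0 ≤ stsAdj T i := by
  unfold stsAdj; split <;> norm_num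

lemma stsAdj_le_one (T : Finset (Finset (Fin v))) (i : Fin 3 → Fin v) : stsAdj T i ≤ 1 := by
  unfold stsAdj; split <;> norm_num

lemma tinner_stsAdj_self (T : Finset (Finset (Fin v))) :
    tinner (stsAdj T) (stsAdj T) = ∑ i, stsAdj T i := by
  refine sum_congr rfl fun i _ => ?_
  unfold stsAdj; split <;> norm_num

lemma IsSTS.existsUnique_third (hT : IsSTS v T) {x y : Fin v} (hxy : x ≠ y) :
    ∃! z, {x, y, z} ∈ T := by
  obtain ⟨t, ⟨htT, hxt, hyt⟩, huniq⟩ := hT.2 x y hxy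
  obtain ⟨z, rfl⟩ := exists_eq_triple_of_card_eq_three (hT.1 t htT) hxt hyt hxy
  refine ⟨z, htT, fun z' hz' => ?_⟩
  obtain ⟨-, hxz', hyz'⟩ := ne_of_card_triple_eq_three (hT.1 _ hz')
  have hmem : z' ∈ ({x, y, z} : Finset (Fin v)) := huniq _ ⟨hz', by simp, by simp⟩ ▸ by simp
  simp only [mem_insert, mem_singleton] at hmem
  grind

lemma IsSTS.stsAdj_apply (hT : IsSTS v T) (i : Fin 3 → Fin v) :
    stsAdj T i = if univ.image i ∈ T then 1 else 0 := by
  have hinj : univ.image i ∈ T → Function.Injective i := fun h => by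
    rw [← Set.injOn_univ, ← coe_univ, ← card_image_iff, hT.1 _ h, card_univ, Fintype.card_fin]
  unfold stsAdj
  by_cases h : univ.image i ∈ T <;> simp [h, hinj]

lemma IsSTS.stsAdj_triple (hT : IsSTS v T) (x y z : Fin v) :
    stsAdj T ![x, y, z] = if {x, y, z} ∈ T then 1 else 0 := by
  rw [hT.stsAdj_apply]
  simp [Fin.univ_succ, image_insert]

-- Summing over the third point first, each ordered pair of distinct points contributes `1`.
lemma IsSTS.sum_stsAdj (hT : IsSTS v T) : ∑ i, stsAdj T i = v * (v - 1) := by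
  have hrow : ∀ x y : Fin v, ∑ z, stsAdj T ![x, y, z] = 1 - if x = y then 1 else 0 := by
    intro x y
    simp only [hT.stsAdj_triple, sum_boole]
    split_ifs with hxy
    · subst hxy
      rw [sub_self, Nat.cast_eq_zero, card_eq_zero, filter_eq_empty_iff]
      exact fun z _ hz => (ne_of_card_triple_eq_three (hT.1 _ hz)).1 rfl
    · obtain ⟨z, hz, huniq⟩ := hT.existsUnique_third hxy
      rw [sub_zero, Nat.cast_eq_one, card_eq_one]
      exact ⟨z, by ext w; simpa using ⟨huniq w, fun h => h ▸ hz⟩⟩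
  simp [Fintype.sum_fin_three_pi, hrow, sum_sub_distrib, mul_sub]

lemma IsSTS.tinner_le (h₁ : IsSTS v T₁) (hD : IsDoublyStochastic D)
    (T₂ : Finset (Finset (Fin v))) :
    tinner (stsAdj T₁) (tensorApply D (stsAdj T₂)) ≤ v * (v - 1) :=
  h₁.sum_stsAdj ▸ tinner_le_sum (stsAdj_nonneg T₁) (hD.tensorApply_le_one (stsAdj_le_one T₂))

lemma IsSTS.image_perm_eq (h₁ : IsSTS v T₁) (h₂ : IsSTS v T₂) (σ : Equiv.Perm (Fin v))
    (hσ : ∀ t ∈ T₁, t.image σ ∈ T₂) : T₁.image (fun t => t.image σ) = T₂ := by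
  refine Subset.antisymm (fun s hs => ?_) (fun t ht => ?_)
  · obtain ⟨t, ht, rfl⟩ := mem_image.1 hs
    exact hσ t ht
  · obtain ⟨x, y, z, hxy, -, -, rfl⟩ := card_eq_three.1 (h₂.1 t ht)
    obtain ⟨w, hw, -⟩ := h₁.existsUnique_third (σ.symm.injective.ne hxy)
    have hσw : {x, y, σ w} ∈ T₂ := by simpa [image_insert] using hσ _ hw
    have : σ w = z := (h₂.existsUnique_third hxy).unique hσw ht
    exact mem_image.2 ⟨_, hw, by simp [image_insert, this]⟩

lemma IsSTS.support_subsingleton (h₁ : IsSTS v T₁) (h₂ : IsSTS v T₂)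
    (hD : IsDoublyStochastic D)
    (halign : ∀ {x y z a b c}, {x, y, z} ∈ T₁ → 0 < D x a → 0 < D y b → 0 < D z c →
      {a, b, c} ∈ T₂)
    (x : Fin v) (a a' : Fin v) (ha : 0 < D x a) (ha' : 0 < D x a') : a = a' := by
  rcases subsingleton_or_nontrivial (Fin v) with _ | _
  · exact Subsingleton.elim a a'
  obtain ⟨y, hyx⟩ := exists_ne x
  obtain ⟨z, hz, -⟩ := h₁.existsUnique_third hyx.symm
  obtain ⟨b, hb⟩ := hD.exists_pos y
  obtain ⟨c, hc⟩ := hD.exists_pos z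
  have habc := halign hz ha hb hc
  have ha'bc := halign hz ha' hb hc
  obtain ⟨-, -, hbc⟩ := ne_of_card_triple_eq_three (h₂.1 _ habc)
  rw [insert_comm, pair_comm] at habc ha'bc
  exact (h₂.existsUnique_third hbc).unique habc ha'bc

lemma IsSTS.exists_perm_of_tinner_eq (h₁ : IsSTS v T₁) (h₂ : IsSTS v T₂)
    (hD : IsDoublyStochastic D)
    (heq : tinner (stsAdj T₁) (tensorApply D (stsAdj T₂)) = v * (v - 1)) :
    ∃ σ : Equiv.Perm (Fin v), T₁.image (fun t => t.image σ) = T₂ := by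
  have halign {x y z a b c : Fin v} (hxyz : {x, y, z} ∈ T₁) (ha : 0 < D x a) (hb : 0 < D y b)
      (hc : 0 < D z c) : {a, b, c} ∈ T₂ := by
    have hi : tensorApply D (stsAdj T₂) ![x, y, z] = 1 :=
      eq_one_of_tinner_eq_sum (stsAdj_nonneg T₁) (hD.tensorApply_le_one (stsAdj_le_one T₂))
        (heq.trans h₁.sum_stsAdj.symm) (by simp [h₁.stsAdj_triple, hxyz])
    have hj : stsAdj T₂ ![a, b, c] = 1 :=
      hD.eq_one_of_tensorApply_eq_one (stsAdj_le_one T₂) hi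
        (by intro l; fin_cases l <;> assumption)
    simpa [h₂.stsAdj_triple] using hj
  obtain ⟨σ, hσ⟩ := hD.exists_perm_of_support_subsingleton (h₁.support_subsingleton h₂ hD halign)
  refine ⟨σ, h₁.image_perm_eq h₂ σ fun t ht => ?_⟩
  obtain ⟨x, y, z, -, -, -, rfl⟩ := card_eq_three.1 (h₁.1 t ht)
  simpa [image_insert] using halign ht (hσ x) (hσ y) (hσ z)

end SteinerTripleSystems

/-- **Sinkhorn separation of non-isomorphic Steiner triple systems**: if no bijection of
`[v]` carries the triples of `S₁` onto the triples of `S₂`, then every doubly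
stochastic `D` has `⟨A₁, D^{⊗3}·A₂⟩ < v(v−1)`; consequently the relaxed cross-alignment
score is strictly below `v(v−1)`, which equals the relaxed self-alignment score. -/
theorem sts_sinkhorn_strict_separation (v : ℕ) (T₁ T₂ : Finset (Finset (Fin v)))
    (h₁ : IsSTS v T₁) (h₂ : IsSTS v T₂)
    (hniso : ¬ ∃ σ : Equiv.Perm (Fin v), T₁.image (fun t => t.image σ) = T₂) :
    (∀ D : Fin v → Fin v → ℝ, IsDoublyStochastic D →
      tinner (stsAdj T₁) (tensorApply D (stsAdj T₂)) < (v : ℝ) * ((v : ℝ) - 1)) ∧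
    sSup ((fun D : Fin v → Fin v → ℝ => tinner (stsAdj T₁) (tensorApply D (stsAdj T₂))) ''
        {D | IsDoublyStochastic D}) < (v : ℝ) * ((v : ℝ) - 1) ∧
    sSup ((fun D : Fin v → Fin v → ℝ => tinner (stsAdj T₁) (tensorApply D (stsAdj T₁))) ''
        {D | IsDoublyStochastic D}) = (v : ℝ) * ((v : ℝ) - 1) := by
  have hstrict (D : Fin v → Fin v → ℝ) (hD : IsDoublyStochastic D) :
      tinner (stsAdj T₁) (tensorApply D (stsAdj T₂)) < v * (v - 1) :=
    (h₁.tinner_le hD T₂).lt_of_ne fun heq => hniso (h₁.exists_perm_of_tinner_eq h₂ hD heq)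
  refine ⟨hstrict, ?_, ?_⟩
  · obtain ⟨D, hD, hmax⟩ := (isCompact_setOf_isDoublyStochastic.image
      (continuous_tinner_tensorApply _ _)).sSup_mem ⟨_, _, isDoublyStochastic_one, rfl⟩
    exact hmax ▸ hstrict D hD
  · refine IsGreatest.csSup_eq ⟨⟨_, isDoublyStochastic_one, ?_⟩, ?_⟩
    · dsimp only
      rw [tensorApply_one, tinner_stsAdj_self, h₁.sum_stsAdj]
    · rintro _ ⟨D, hD, rfl⟩
      exact h₁.tinner_le hD T₁
end
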